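/- arXiv:2012.01924 — 2 statements merged into one kernel-verified Lean document; each statement's English description precedes it below -/
import Mathlib

section
/- Let β > 1, δ > 0, T_s > 0, N ≥ 0, μ₂ > 0, and suppose μ₁ > 2δ/(T_s·√(1−β⁻²)) + N and 0 < η < 1/β where η = (μ₁ − N)/μ₂. Then the convergence time estimate 𝒯₂ = δ(√(1−η²) + 1)/((μ₁ − N)·√(1−η²)) satisfies 𝒯₂ ≤ T_s. -/
theorem stmt_9 (β δ Ts N μ₁ μ₂ : ℝ) (hβ : 1 < β) (hδ : 0 < δ) (hTs : 0 < Ts) (hN : 0 ≤ N)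
    (hμ₂ : 0 < μ₂)
    (hμ₁ : μ₁ > 2 * δ / (Ts * Real.sqrt (1 - β⁻¹ ^ 2)) + N)
    (hη : 0 < (μ₁ - N) / μ₂ ∧ (μ₁ - N) / μ₂ < 1 / β) :
    δ * (Real.sqrt (1 - ((μ₁ - N) / μ₂) ^ 2) + 1) /
        ((μ₁ - N) * Real.sqrt (1 - ((μ₁ - N) / μ₂) ^ 2)) ≤ Ts := by
  obtain ⟨hη1, hη2⟩ := hη
  set η := (μ₁ - N) / μ₂ with hηdef
  have hβ0 : 0 < β := by linarith
  have hβinv : β⁻¹ < 1 := by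
    rw [inv_lt_one_iff₀]; right; exact hβ
  have hβinv0 : 0 < β⁻¹ := by positivity
  have hc2 : (0:ℝ) < 1 - β⁻¹ ^ 2 := by nlinarith
  set c := Real.sqrt (1 - β⁻¹ ^ 2) with hcdef
  have hc : 0 < c := Real.sqrt_pos.mpr hc2
  have hc1 : c ≤ 1 := by
    rw [hcdef]
    exact Real.sqrt_le_one.mpr (by nlinarith)
  have hηβ : η < β⁻¹ := by rwa [one_div] at hη2
  have hs2 : 1 - β⁻¹ ^ 2 ≤ 1 - η ^ 2 := by nlinarith
  set s := Real.sqrt (1 - η ^ 2) with hsdef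
  have hcs : c ≤ s := Real.sqrt_le_sqrt hs2
  have hs : 0 < s := lt_of_lt_of_le hc hcs
  have hμ : 0 < μ₁ - N := by
    have : 0 < 2 * δ / (Ts * c) := by positivity
    linarith
  rw [div_le_iff₀ (by positivity)]
  have key : μ₁ - N ≥ 2 * δ / (Ts * c) := le_of_lt (by linarith)
  have key2 : (μ₁ - N) * (Ts * c) ≥ 2 * δ := by
    rw [ge_iff_le, ← div_le_iff₀ (by positivity)]; exact key
  -- need δ*(s+1) ≤ Ts*((μ₁-N)*s)
  have h1 : c * (s + 1) ≤ 2 * s := by nlinarith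
  nlinarith [mul_le_mul_of_nonneg_left h1 hδ.le, mul_pos hμ hs,
    mul_le_mul_of_nonneg_right key2 hs.le]
end

section
/- Let μ₁ ≥ N ≥ 0 and μ₂ > 0, and let (x₁, x₂) be a Filippov solution of the twisting closed loop on [0,∞). Then the function t ↦ V(x₁(t), x₂(t)) is nonincreasing on [0,∞); in particular, if V(x₁(0), x₂(0)) ≤ R for some R > 0, then (x₁(t), x₂(t)) ∈ Γ_R for all t ≥ 0. -/
open MeasureTheory

/-- Filippov set-valued sign map: `S a = {1}` if `a > 0`, `{-1}` if `a < 0`,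
and `[-1, 1]` if `a = 0`. -/
noncomputable def filippovSign (a : ℝ) : Set ℝ :=
  if 0 < a then {1} else if a < 0 then {-1} else Set.Icc (-1) 1

/-- A Filippov solution of the twisting closed loop on `[0,∞)`: a pair of locally
absolutely continuous functions `x₁ x₂ : ℝ → ℝ` (encoded as indefinite integrals of
locally integrable functions `v₁ v₂` on `[0,∞)`) such that for a.e. `t ≥ 0`,
`x₁' t = x₂ t` and `x₂' t ∈ -μ₂ • S(x₁ t) - μ₁ • S(x₂ t) + [-N, N]`. -/
def IsTwistingFilippovSolution (μ₁ μ₂ N : ℝ) (x₁ x₂ : ℝ → ℝ) : Prop :=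
  ∃ v₁ v₂ : ℝ → ℝ,
    LocallyIntegrableOn v₁ (Set.Ici 0) volume ∧
    LocallyIntegrableOn v₂ (Set.Ici 0) volume ∧
    (∀ t, 0 ≤ t → x₁ t = x₁ 0 + ∫ s in (0 : ℝ)..t, v₁ s) ∧
    (∀ t, 0 ≤ t → x₂ t = x₂ 0 + ∫ s in (0 : ℝ)..t, v₂ s) ∧
    (∀ᵐ t ∂(volume : Measure ℝ), 0 ≤ t →
      v₁ t = x₂ t ∧
      v₂ t ∈ {w : ℝ | ∃ s₁ ∈ filippovSign (x₁ t), ∃ s₂ ∈ filippovSign (x₂ t),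
        ∃ d ∈ Set.Icc (-N) N, w = -μ₂ * s₁ - μ₁ * s₂ + d})

/-- The Lyapunov function `V(x₁, x₂) = μ₂ |x₁| + x₂² / 2`. -/
noncomputable def twistingV (μ₂ x₁ x₂ : ℝ) : ℝ := μ₂ * |x₁| + x₂ ^ 2 / 2

/-
Along a Filippov solution, `t ↦ V(x₁ t, x₂ t)` is absolutely continuous, hence the integral of
its almost-everywhere derivative. At almost every time `x₁`, `x₂` and `V(x₁, x₂)` are all
differentiable, and then the derivative of `|x₁|` is `s₁ x₂` for every `s₁ ∈ S(x₁)`: away from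
the zeros of `x₁` this is the chain rule, and at a zero `|x₁|` has a minimum, which forces both
derivatives to vanish. The `μ₂`-terms therefore cancel and `dV/dt = x₂ (-μ₁ s₂ + d)
= -μ₁ |x₂| + x₂ d ≤ (N - μ₁) |x₂| ≤ 0`.
-/

open Set Filter

theorem AbsolutelyContinuousOnInterval.congr {X : Type*} [PseudoMetricSpace X] {f g : ℝ → X}
    {a b : ℝ} (hf : AbsolutelyContinuousOnInterval f a b) (hfg : EqOn f g (uIcc a b)) :
    AbsolutelyContinuousOnInterval g a b := by
  rw [absolutelyContinuousOnInterval_iff] at hf ⊢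
  intro ε hε
  obtain ⟨δ, hδ, hfδ⟩ := hf ε hε
  refine ⟨δ, hδ, fun E hE hlen => ?_⟩
  convert hfδ E hE hlen using 2 with i hi
  rw [hfg (hE.1 i hi).1, hfg (hE.1 i hi).2]

theorem LipschitzWith.comp_absolutelyContinuousOnInterval {X Y : Type*} [PseudoMetricSpace X]
    [PseudoMetricSpace Y] {g : X → Y} {K : NNReal} (hg : LipschitzWith K g) {f : ℝ → X}
    {a b : ℝ} (hf : AbsolutelyContinuousOnInterval f a b) :
    AbsolutelyContinuousOnInterval (g ∘ f) a b := by
  refine squeeze_zero (fun E => Finset.sum_nonneg fun _ _ => dist_nonneg) (fun E => ?_)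
    (by simpa using Tendsto.const_mul (K : ℝ) hf)
  rw [Finset.mul_sum]
  gcongr
  exact hg.dist_le_mul _ _

section Primitive

variable {v x : ℝ → ℝ} {a : ℝ}

theorem absolutelyContinuousOnInterval_of_eq_integral (hv : LocallyIntegrableOn v (Ici a))
    (hx : ∀ t, a ≤ t → x t = x a + ∫ s in a..t, v s) {b : ℝ} (hab : a ≤ b) :
    AbsolutelyContinuousOnInterval x a b := by
  have hvab : IntervalIntegrable v volume a b :=
    (hv.integrableOn_compact_subset (by simp [uIcc_of_le hab, Icc_subset_Ici_self])
      isCompact_uIcc).intervalIntegrable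
  refine ((LipschitzWith.const (x a)).lipschitzOnWith.absolutelyContinuousOnInterval.fun_add
    (hvab.absolutelyContinuousOnInterval_intervalIntegral left_mem_uIcc)).congr fun t ht => ?_
  rw [uIcc_of_le hab] at ht
  exact (hx t ht.1).symm

theorem ae_hasDerivAt_of_eq_integral (hv : LocallyIntegrableOn v (Ici a))
    (hx : ∀ t, a ≤ t → x t = x a + ∫ s in a..t, v s) :
    ∀ᵐ t, a < t → HasDerivAt x (v t) t := by
  have hvn (n : ℕ) : IntervalIntegrable v volume a (a + n) :=
    (hv.integrableOn_compact_subset (by simp [uIcc_of_le, Icc_subset_Ici_self])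
      isCompact_uIcc).intervalIntegrable
  filter_upwards [ae_all_iff.2 fun n => (hvn n).ae_hasDerivAt_integral] with t ht hat
  obtain ⟨n, hn⟩ := exists_nat_gt (t - a)
  have htn : t ∈ uIcc a (a + n) := by
    rw [uIcc_of_le (le_add_of_nonneg_right n.cast_nonneg)]; constructor <;> linarith
  refine ((ht n htn a left_mem_uIcc).const_add (x a)).congr_of_eventuallyEq ?_
  filter_upwards [Ioi_mem_nhds hat] with s hs using hx s hs.le

end Primitive

theorem antitoneOn_Ici_of_ae_hasDerivAt_nonpos {f : ℝ → ℝ} {a : ℝ}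
    (hf : ∀ b, a ≤ b → AbsolutelyContinuousOnInterval f a b)
    (hf' : ∀ᵐ t, a < t → ∀ f', HasDerivAt f f' t → f' ≤ 0) : AntitoneOn f (Ici a) := by
  intro s hs t ht hst
  have hfst : AbsolutelyContinuousOnInterval f s t :=
    (hf t ht).mono (uIcc_subset_uIcc (mem_uIcc.2 (.inl ⟨hs, hst⟩)) right_mem_uIcc)
  rw [← sub_nonpos, ← hfst.integral_deriv_eq_sub, intervalIntegral.integral_of_le hst]
  refine integral_nonpos_of_ae ((ae_restrict_iff' measurableSet_Ioc).2 ?_)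
  filter_upwards [hfst.ae_differentiableAt, hf'] with r hdiff hr hrst
  exact hr (lt_of_le_of_lt hs hrst.1) _
    (hdiff (by simpa [uIcc_of_le hst] using Ioc_subset_Icc_self hrst)).hasDerivAt

theorem mul_eq_abs_of_mem_filippovSign {a s : ℝ} (hs : s ∈ filippovSign a) : a * s = |a| := by
  unfold filippovSign at hs
  rcases lt_trichotomy a 0 with ha | rfl | ha
  · simp_all [not_lt_of_gt ha, abs_of_neg ha]
  · simp
  · simp_all [abs_of_pos ha]

theorem HasDerivAt.eq_mul_of_hasDerivAt_abs {f : ℝ → ℝ} {f' A t s : ℝ} (hf : HasDerivAt f f' t)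
    (habs : HasDerivAt (fun r => |f r|) A t) (hs : s ∈ filippovSign (f t)) : A = s * f' := by
  rcases lt_trichotomy (f t) 0 with hneg | hzero | hpos
  · have hs' : s = -1 := by simpa [filippovSign, not_lt_of_gt hneg, hneg] using hs
    rw [habs.unique ((hasDerivAt_abs_neg hneg).comp t hf), hs']
  · have hA : A = 0 := by
      refine IsLocalMin.hasDerivAt_eq_zero (.of_forall fun r => ?_) habs
      simp [hzero]
    have hf0 : HasDerivAt f 0 t := by
      rw [hA] at habs
      rw [hasDerivAt_iff_isLittleO] at habs ⊢
      simpa [hzero, Asymptotics.isLittleO_abs_left] using habs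
    rw [hA, hf.unique hf0, mul_zero]
  · have hs' : s = 1 := by simpa [filippovSign, hpos] using hs
    rw [habs.unique ((hasDerivAt_abs_pos hpos).comp t hf), hs']

theorem absolutelyContinuousOnInterval_twistingV {μ₂ a b : ℝ} {x₁ x₂ : ℝ → ℝ}
    (h₁ : AbsolutelyContinuousOnInterval x₁ a b) (h₂ : AbsolutelyContinuousOnInterval x₂ a b) :
    AbsolutelyContinuousOnInterval (fun t => twistingV μ₂ (x₁ t) (x₂ t)) a b := by
  have habs := LipschitzWith.comp_absolutelyContinuousOnInterval lipschitzWith_one_norm h₁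
  refine ((habs.const_mul μ₂).fun_add ((h₂.fun_mul h₂).const_mul (1 / 2))).congr fun t _ => ?_
  simp only [twistingV, Function.comp_apply, Real.norm_eq_abs]
  ring

theorem nonpos_of_hasDerivAt_twistingV {μ₁ μ₂ N : ℝ} (hμ₁ : N ≤ μ₁) (hμ₂ : μ₂ ≠ 0)
    {x₁ x₂ : ℝ → ℝ} {t s₁ s₂ d V' : ℝ} (hs₁ : s₁ ∈ filippovSign (x₁ t))
    (hs₂ : s₂ ∈ filippovSign (x₂ t)) (hd : d ∈ Icc (-N) N) (h₁ : HasDerivAt x₁ (x₂ t) t)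
    (h₂ : HasDerivAt x₂ (-μ₂ * s₁ - μ₁ * s₂ + d) t)
    (hV : HasDerivAt (fun r => twistingV μ₂ (x₁ r) (x₂ r)) V' t) : V' ≤ 0 := by
  set w := -μ₂ * s₁ - μ₁ * s₂ + d
  have habs : HasDerivAt (fun r => |x₁ r|) ((V' - x₂ t * w) / μ₂) t := by
    have hsq : HasDerivAt (fun r => x₂ r ^ 2 / 2) (x₂ t * w) t :=
      ((h₂.fun_pow 2).div_const 2).congr_deriv (by norm_num; ring)
    refine ((hV.sub hsq).div_const μ₂).congr_of_eventuallyEq (.of_forall fun r => ?_)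
    simp [twistingV, field]
  have hA := h₁.eq_mul_of_hasDerivAt_abs habs hs₁
  have hV' : V' = x₂ t * (d - μ₁ * s₂) := by
    field_simp at hA
    linear_combination hA
  have hx₂d : x₂ t * d ≤ |x₂ t| * N := by
    calc x₂ t * d ≤ |x₂ t * d| := le_abs_self _
      _ = |x₂ t| * |d| := abs_mul _ _
      _ ≤ |x₂ t| * N := by gcongr; exact abs_le.2 hd
  calc V' = x₂ t * d - μ₁ * (x₂ t * s₂) := by rw [hV']; ring
    _ = x₂ t * d - μ₁ * |x₂ t| := by rw [mul_eq_abs_of_mem_filippovSign hs₂]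
    _ ≤ -((μ₁ - N) * |x₂ t|) := by linarith
    _ ≤ 0 := neg_nonpos.2 (mul_nonneg (sub_nonneg.2 hμ₁) (abs_nonneg _))

theorem stmt_11_general (μ₁ μ₂ N : ℝ) (hμ₁ : N ≤ μ₁) (hμ₂ : 0 < μ₂)
    (x₁ x₂ : ℝ → ℝ) (hsol : IsTwistingFilippovSolution μ₁ μ₂ N x₁ x₂) :
    AntitoneOn (fun t => twistingV μ₂ (x₁ t) (x₂ t)) (Set.Ici 0) ∧
      ∀ R : ℝ, 0 < R → twistingV μ₂ (x₁ 0) (x₂ 0) ≤ R →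
        ∀ t, 0 ≤ t → twistingV μ₂ (x₁ t) (x₂ t) ≤ R := by
  obtain ⟨v₁, v₂, hv₁, hv₂, hx₁, hx₂, hfield⟩ := hsol
  have hV : AntitoneOn (fun t => twistingV μ₂ (x₁ t) (x₂ t)) (Ici 0) := by
    refine antitoneOn_Ici_of_ae_hasDerivAt_nonpos (fun b hb =>
      absolutelyContinuousOnInterval_twistingV
        (absolutelyContinuousOnInterval_of_eq_integral hv₁ hx₁ hb)
        (absolutelyContinuousOnInterval_of_eq_integral hv₂ hx₂ hb)) ?_
    filter_upwards [hfield, ae_hasDerivAt_of_eq_integral hv₁ hx₁,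
      ae_hasDerivAt_of_eq_integral hv₂ hx₂] with t ht h₁ h₂ htpos V' hV'
    obtain ⟨hv₁t, s₁, hs₁, s₂, hs₂, d, hd, hv₂t⟩ := ht htpos.le
    exact nonpos_of_hasDerivAt_twistingV hμ₁ hμ₂.ne' hs₁ hs₂ hd (hv₁t ▸ h₁ htpos)
      (hv₂t ▸ h₂ htpos) hV'
  exact ⟨hV, fun R _ hR t ht => (hV self_mem_Ici ht ht).trans hR⟩

theorem stmt_11 (μ₁ μ₂ N : ℝ) (hN : 0 ≤ N) (hμ₁ : N ≤ μ₁) (hμ₂ : 0 < μ₂)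
    (x₁ x₂ : ℝ → ℝ) (hsol : IsTwistingFilippovSolution μ₁ μ₂ N x₁ x₂) :
    AntitoneOn (fun t => twistingV μ₂ (x₁ t) (x₂ t)) (Set.Ici 0) ∧
      ∀ R : ℝ, 0 < R → twistingV μ₂ (x₁ 0) (x₂ 0) ≤ R →
        ∀ t, 0 ≤ t → twistingV μ₂ (x₁ t) (x₂ t) ≤ R :=
  stmt_11_general μ₁ μ₂ N hμ₁ hμ₂ x₁ x₂ hsol
end
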